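/- Let Z₁(λ), Z₂(λ) be differentiable families of 2n×2n symplectic matrices with Ψ(Zᵢ(λ)) := Jᵀ Zᵢ'(λ) Zᵢ(λ)⁻¹. Then Ψ(Z₂(λ)⁻¹ Z₁(λ)) = Z₂(λ)ᵀ (Ψ(Z₁(λ)) − Ψ(Z₂(λ))) Z₂(λ). -/

import Mathlib

/-! With `W = Z₂⁻¹ Z₁`, differentiating `Z₂ W = Z₁` by the product rule gives
`W' = Z₂⁻¹ (Z₁' - Z₂' W)`, hence `W' W⁻¹ = Z₂⁻¹ (Z₁' Z₁⁻¹ - Z₂' Z₂⁻¹) Z₂` without ever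
differentiating an inverse. Transposing `Z₂ᵀ J Z₂ = J` gives `Jᵀ Z₂⁻¹ = Z₂ᵀ Jᵀ`, which moves `Jᵀ`
past `Z₂⁻¹`. -/
open Matrix
noncomputable section

/-- The standard symplectic matrix `J = [[0, I], [-I, 0]]`. -/
def Jmat (k : Type*) [Fintype k] [DecidableEq k] : Matrix (k ⊕ k) (k ⊕ k) ℝ :=
  fromBlocks 0 1 (-1) 0

/-- A matrix `S` is symplectic if `Sᵀ J S = J`. -/
def IsSymplectic {k : Type*} [Fintype k] [DecidableEq k]
    (S : Matrix (k ⊕ k) (k ⊕ k) ℝ) : Prop :=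
  Sᵀ * Jmat k * S = Jmat k

/-- `S'` is the (entrywise) derivative family of the matrix family `S`. -/
def HasMatDeriv {k m : Type*} (S S' : ℝ → Matrix k m ℝ) : Prop :=
  ∀ (l : ℝ) (i : k) (j : m), HasDerivAt (fun t => S t i j) (S' l i j) l

/-- `Ψ(S(λ)) = Jᵀ S'(λ) S(λ)⁻¹`, where `S'` is a derivative family of `S`. -/
def Psi {k : Type*} [Fintype k] [DecidableEq k]
    (S S' : ℝ → Matrix (k ⊕ k) (k ⊕ k) ℝ) (l : ℝ) : Matrix (k ⊕ k) (k ⊕ k) ℝ :=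
  (Jmat k)ᵀ * S' l * (S l)⁻¹

section Symplectic

variable {k : Type*} [Fintype k] [DecidableEq k]

lemma Jmat_transpose_mul_self : (Jmat k)ᵀ * Jmat k = 1 := by
  simp [Jmat, fromBlocks_transpose, fromBlocks_multiply, ← fromBlocks_one]

lemma IsSymplectic.isUnit_det {S : Matrix (k ⊕ k) (k ⊕ k) ℝ} (h : IsSymplectic S) :
    IsUnit S.det :=
  isUnit_det_of_left_inverse (B := (Jmat k)ᵀ * Sᵀ * Jmat k) <| by
    rw [mul_assoc, mul_assoc, ← mul_assoc Sᵀ, h, Jmat_transpose_mul_self]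

lemma IsSymplectic.transpose_mul_Jmat_transpose {S : Matrix (k ⊕ k) (k ⊕ k) ℝ}
    (h : IsSymplectic S) : Sᵀ * (Jmat k)ᵀ = (Jmat k)ᵀ * S⁻¹ := by
  have hT : Sᵀ * (Jmat k)ᵀ * S = (Jmat k)ᵀ := by
    simpa [Matrix.transpose_mul, Matrix.mul_assoc] using congrArg Matrix.transpose h
  calc Sᵀ * (Jmat k)ᵀ = Sᵀ * (Jmat k)ᵀ * S * S⁻¹ :=
        (mul_nonsing_inv_cancel_right _ _ h.isUnit_det).symm
    _ = (Jmat k)ᵀ * S⁻¹ := by rw [hT]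

end Symplectic

section Derivative

variable {k m p : Type*}

lemma HasMatDeriv.unique {S S' S'' : ℝ → Matrix k m ℝ}
    (h₁ : HasMatDeriv S S') (h₂ : HasMatDeriv S S'') : S' = S'' := by
  funext l; ext i j; exact (h₁ l i j).unique (h₂ l i j)

lemma HasMatDeriv.mul [Fintype m] {A A' : ℝ → Matrix k m ℝ} {B B' : ℝ → Matrix m p ℝ}
    (hA : HasMatDeriv A A') (hB : HasMatDeriv B B') :
    HasMatDeriv (fun l => A l * B l) (fun l => A' l * B l + A l * B' l) := by
  intro l i j
  simpa [Matrix.mul_apply, Finset.sum_add_distrib] using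
    HasDerivAt.fun_sum fun x _ => (hA l i x).mul (hB l x j)

variable [Fintype m] [DecidableEq m]

lemma HasMatDeriv.inv_mul_deriv_eq {A A' B B' W' : ℝ → Matrix m m ℝ}
    (hA : HasMatDeriv A A') (hB : HasMatDeriv B B')
    (hW : HasMatDeriv (fun l => (A l)⁻¹ * B l) W') (hAu : ∀ l, IsUnit (A l).det) (l : ℝ) :
    W' l = (A l)⁻¹ * (B' l - A' l * ((A l)⁻¹ * B l)) := by
  have hAW : (fun l => A l * ((A l)⁻¹ * B l)) = B :=
    funext fun l => mul_nonsing_inv_cancel_left _ _ (hAu l)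
  have hB' := congrFun ((hAW ▸ hA.mul hW).unique hB) l
  rw [← hB', add_sub_cancel_left, nonsing_inv_mul_cancel_left _ _ (hAu l)]

lemma HasMatDeriv.inv_mul_deriv_mul_inv {A A' B B' W' : ℝ → Matrix m m ℝ}
    (hA : HasMatDeriv A A') (hB : HasMatDeriv B B')
    (hW : HasMatDeriv (fun l => (A l)⁻¹ * B l) W') (hAu : ∀ l, IsUnit (A l).det) {l : ℝ}
    (hBu : IsUnit (B l).det) :
    W' l * ((A l)⁻¹ * B l)⁻¹ = (A l)⁻¹ * (B' l * (B l)⁻¹ - A' l * (A l)⁻¹) * A l := by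
  rw [hA.inv_mul_deriv_eq hB hW hAu, Matrix.mul_inv_rev, nonsing_inv_nonsing_inv _ (hAu l)]
  simp only [Matrix.mul_sub, Matrix.sub_mul, Matrix.mul_assoc,
    mul_nonsing_inv_cancel_left _ _ hBu]

end Derivative

/-- `Ψ(Z₂(λ)⁻¹ Z₁(λ)) = Z₂(λ)ᵀ (Ψ(Z₁(λ)) − Ψ(Z₂(λ))) Z₂(λ)`. -/
theorem statement5 (n : ℕ)
    (Z₁ Z₁' Z₂ Z₂' W' : ℝ → Matrix (Fin n ⊕ Fin n) (Fin n ⊕ Fin n) ℝ)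
    (hZ₁ : ∀ l, IsSymplectic (Z₁ l)) (hZ₂ : ∀ l, IsSymplectic (Z₂ l))
    (hd₁ : HasMatDeriv Z₁ Z₁') (hd₂ : HasMatDeriv Z₂ Z₂')
    (hdW : HasMatDeriv (fun l => (Z₂ l)⁻¹ * Z₁ l) W') :
    ∀ l, Psi (fun t => (Z₂ t)⁻¹ * Z₁ t) W' l
        = (Z₂ l)ᵀ * (Psi Z₁ Z₁' l - Psi Z₂ Z₂' l) * Z₂ l := by
  intro l
  have hlog := hd₂.inv_mul_deriv_mul_inv hd₁ hdW (fun t => (hZ₂ t).isUnit_det) (hZ₁ l).isUnit_det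
  simp only [Psi, Matrix.mul_assoc, hlog, ← Matrix.mul_sub]
  rw [← Matrix.mul_assoc (Jmat _)ᵀ, ← (hZ₂ l).transpose_mul_Jmat_transpose, Matrix.mul_assoc]
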